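/- Let m ≥ 2 be an even integer. Define φ_ex(t) = π² e^{−π²t}, u_ex(x,y,t) = e^{−π²t}(cos(πx)+1)cos(πy), f_ex(x,y) = cos(πx)cos(πy), ũ_m(x,y,t) = u_ex(x,y,t) + m⁻¹ e^{−π²t}(cos(mπx)−1)cos(πy), f̃_m(x,y) = f_ex(x,y) + m·cos(mπx)cos(πy), g₀m(x,y) = ũ_m(x,y,0), g₁m(x,y) = ũ_m(x,y,1). Then: (a) ∂ₜũ_m − ∂ₓₓũ_m − ∂ᵧᵧũ_m = φ_ex(t)·f̃_m(x,y) for all (x,y,t); (b) ∂ₓũ_m(0,y,t) = ∂ₓũ_m(1,y,t) = ∂ᵧũ_m(x,0,t) = ∂ᵧũ_m(x,1,t) = 0 and ũ_m(1,y,t) = 0 for all x,y,t ∈ [0,1]; (c) ‖g₀m − u_ex(·,·,0)‖_{L²(Ω)} = √3/(2m) and ‖g₁m − u_ex(·,·,1)‖_{L²(Ω)} = e^{−π²}√3/(2m); (d) ‖f̃_m − f_ex‖_{L²(Ω)} = m/2. (Hence a data error of order 1/m produces a solution error of order m, so the inverse source problem is ill-posed.) -/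

import Mathlib

open Real intervalIntegral

/-
Everything is separable: `ũ_m` is `e^{-π²t}` times a combination of the cosine modes
`cos(πx)`, `cos(mπx)` and a constant in `x`, times `cos(πy)`. A mode `cos(cs)` has second
derivative `-c² cos(cs)`, which gives the heat equation, and for `sin c = 0` it satisfies
`∫₀¹ cos(cs) = 0` and `∫₀¹ cos²(cs) = 1/2`, which give the `L²` norms. Evenness of `m` gives
`cos(mπ) = 1`, hence `ũ_m(1,y,t) = 0`.
-/

/-- Exact time factor `φ_ex(t) = π² e^{−π²t}`. -/
noncomputable def phiEx (t : ℝ) : ℝ := π^2 * Real.exp (-π^2 * t)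

/-- Exact solution `u_ex(x,y,t) = e^{−π²t}(cos(πx)+1)cos(πy)`. -/
noncomputable def uEx (x y t : ℝ) : ℝ :=
  Real.exp (-π^2 * t) * (Real.cos (π * x) + 1) * Real.cos (π * y)

/-- Exact source profile `f_ex(x,y) = cos(πx)cos(πy)`. -/
noncomputable def fEx (x y : ℝ) : ℝ := Real.cos (π * x) * Real.cos (π * y)

/-- Disturbed solution `ũ_m = u_ex + m⁻¹ e^{−π²t}(cos(mπx)−1)cos(πy)`. -/
noncomputable def uDist (m : ℕ) (x y t : ℝ) : ℝ :=
  uEx x y t + (m:ℝ)⁻¹ * Real.exp (-π^2 * t) * (Real.cos ((m:ℝ) * π * x) - 1) * Real.cos (π * y)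

/-- Disturbed source profile `f̃_m = f_ex + m cos(mπx) cos(πy)`. -/
noncomputable def fDist (m : ℕ) (x y : ℝ) : ℝ :=
  fEx x y + (m:ℝ) * Real.cos ((m:ℝ) * π * x) * Real.cos (π * y)

theorem hasDerivAt_cos_mul (c x : ℝ) :
    HasDerivAt (fun s => cos (c * s)) (-(c * sin (c * x))) x := by
  simpa [mul_comm] using ((hasDerivAt_id x).const_mul c).cos

theorem hasDerivAt_sin_mul (c x : ℝ) :
    HasDerivAt (fun s => sin (c * s)) (c * cos (c * x)) x := by
  simpa [mul_comm] using ((hasDerivAt_id x).const_mul c).sin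

section CosModes

variable (a₁ a₂ c₁ c₂ b : ℝ)

theorem deriv_cos_modes :
    deriv (fun s => a₁ * cos (c₁ * s) + a₂ * cos (c₂ * s) + b)
      = fun s => -(a₁ * c₁ * sin (c₁ * s) + a₂ * c₂ * sin (c₂ * s)) := by
  funext x
  refine ((((hasDerivAt_cos_mul c₁ x).const_mul a₁).add
    ((hasDerivAt_cos_mul c₂ x).const_mul a₂)).add_const b).deriv.trans ?_
  ring

theorem iteratedDeriv_two_cos_modes :
    iteratedDeriv 2 (fun s => a₁ * cos (c₁ * s) + a₂ * cos (c₂ * s) + b)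
      = fun s => -(a₁ * c₁ ^ 2 * cos (c₁ * s) + a₂ * c₂ ^ 2 * cos (c₂ * s)) := by
  rw [iteratedDeriv_succ, iteratedDeriv_one, deriv_cos_modes]
  funext x
  refine (((hasDerivAt_sin_mul c₁ x).const_mul (a₁ * c₁)).add
    ((hasDerivAt_sin_mul c₂ x).const_mul (a₂ * c₂))).neg.deriv.trans ?_
  ring

end CosModes

theorem integral_cos_mul_sq_of_sin_eq_zero {c : ℝ} (hc : c ≠ 0) (hs : sin c = 0) :
    ∫ x in (0:ℝ)..1, cos (c * x) ^ 2 = 1 / 2 := by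
  rw [intervalIntegral.integral_comp_mul_left (fun u => cos u ^ 2) hc]
  simp [integral_cos_sq, hs]
  field_simp

theorem integral_cos_mul_sub_one_sq_of_sin_eq_zero {c : ℝ} (hc : c ≠ 0) (hs : sin c = 0) :
    ∫ x in (0:ℝ)..1, (cos (c * x) - 1) ^ 2 = 3 / 2 := by
  have hcos : ∫ x in (0:ℝ)..1, cos (c * x) = 0 := by
    rw [intervalIntegral.integral_comp_mul_left cos hc]; simp [hs]
  simp_rw [sub_sq, one_pow, mul_one]
  rw [integral_add, integral_sub, integral_const_mul, hcos,
    integral_cos_mul_sq_of_sin_eq_zero hc hs]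
  · norm_num
  all_goals exact Continuous.intervalIntegrable (by fun_prop) 0 1

theorem integral_integral_mul_cos_pi_sq (g : ℝ → ℝ) :
    ∫ x in (0:ℝ)..1, ∫ y in (0:ℝ)..1, (g x * cos (π * y)) ^ 2
      = (∫ x in (0:ℝ)..1, g x ^ 2) / 2 := by
  simp_rw [mul_pow, integral_const_mul, integral_cos_mul_sq_of_sin_eq_zero pi_ne_zero sin_pi]
  rw [← integral_div]
  simp_rw [mul_one_div]

section HeatExample

variable (m : ℕ) (x y t : ℝ)

theorem uDist_eq_exp_mul : uDist m x y t = exp (-π ^ 2 * t) * uDist m x y 0 := by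
  simp only [uDist, uEx, mul_zero, exp_zero, one_mul]; ring

theorem deriv_uDist_time : deriv (uDist m x y) t = -π ^ 2 * uDist m x y t := by
  have hexp : HasDerivAt (fun τ => exp (-π ^ 2 * τ)) (exp (-π ^ 2 * t) * -π ^ 2) t := by
    simpa using ((hasDerivAt_id t).const_mul (-π ^ 2)).exp
  conv_lhs => rw [funext fun τ => uDist_eq_exp_mul m x y τ, (hexp.mul_const _).deriv]
  rw [uDist_eq_exp_mul m x y t]
  ring

theorem uDist_slice_x :
    (fun s => uDist m s y t)
      = fun s => exp (-π ^ 2 * t) * cos (π * y) * cos (π * s)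
          + (m : ℝ)⁻¹ * exp (-π ^ 2 * t) * cos (π * y) * cos ((m : ℝ) * π * s)
          + exp (-π ^ 2 * t) * cos (π * y) * (1 - (m : ℝ)⁻¹) := by
  funext s; simp only [uDist, uEx]; ring

theorem uDist_slice_y : (fun s => uDist m x s t) = fun s => uDist m x 0 t * cos (π * s) := by
  funext s; simp only [uDist, uEx, mul_zero, cos_zero]; ring

theorem deriv_uDist_x :
    deriv (fun s => uDist m s y t)
      = fun s => -(exp (-π ^ 2 * t) * cos (π * y)
          * π * (sin (π * s) + sin ((m : ℝ) * π * s))) := by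
  rw [uDist_slice_x, deriv_cos_modes]
  funext s
  -- `m⁻¹ * m = 1` only for `m ≠ 0`; for `m = 0` the second mode vanishes on both sides.
  rcases eq_or_ne (m : ℝ) 0 with hm | hm
  · simp [hm]
  · field_simp

theorem iteratedDeriv_two_uDist_x :
    iteratedDeriv 2 (fun s => uDist m s y t) x
      = -(exp (-π ^ 2 * t) * cos (π * y)
          * (π ^ 2 * cos (π * x) + (m : ℝ) * π ^ 2 * cos ((m : ℝ) * π * x))) := by
  rw [uDist_slice_x, iteratedDeriv_two_cos_modes]
  rcases eq_or_ne (m : ℝ) 0 with hm | hm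
  · simp [hm]; ring
  · field_simp

theorem deriv_uDist_y :
    deriv (fun s => uDist m x s t) = fun s => -(uDist m x 0 t * π * sin (π * s)) := by
  rw [uDist_slice_y]
  simpa using deriv_cos_modes (uDist m x 0 t) 0 π 0 0

theorem iteratedDeriv_two_uDist_y :
    iteratedDeriv 2 (fun s => uDist m x s t) y = -π ^ 2 * uDist m x y t := by
  have h := congrFun (iteratedDeriv_two_cos_modes (uDist m x 0 t) 0 π 0 0) y
  simp only [zero_mul, add_zero] at h
  rw [uDist_slice_y, h, congrFun (uDist_slice_y m x t) y]
  ring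

theorem uDist_heat_equation :
    deriv (uDist m x y) t - iteratedDeriv 2 (fun s => uDist m s y t) x
      - iteratedDeriv 2 (fun s => uDist m x s t) y = phiEx t * fDist m x y := by
  rw [deriv_uDist_time, iteratedDeriv_two_uDist_x, iteratedDeriv_two_uDist_y]
  simp only [phiEx, fDist, fEx]
  ring

end HeatExample

theorem uDist_one_eq_zero {m : ℕ} (hm : Even m) (y t : ℝ) : uDist m 1 y t = 0 := by
  simp [uDist, uEx, cos_nat_mul_pi, hm.neg_one_pow]

theorem sqrt_integral_uDist_sub_uEx_sq {m : ℕ} (hm : m ≠ 0) (t : ℝ) :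
    √(∫ x in (0:ℝ)..1, ∫ y in (0:ℝ)..1, (uDist m x y t - uEx x y t) ^ 2)
      = exp (-π ^ 2 * t) * √3 / (2 * m) := by
  have hmπ : (m : ℝ) * π ≠ 0 := mul_ne_zero (Nat.cast_ne_zero.mpr hm) pi_ne_zero
  have hdiff : ∀ x y, uDist m x y t - uEx x y t
      = (m : ℝ)⁻¹ * exp (-π ^ 2 * t) * (cos ((m : ℝ) * π * x) - 1) * cos (π * y) := by
    intro x y; simp only [uDist]; ring
  simp_rw [hdiff, integral_integral_mul_cos_pi_sq, mul_pow, integral_const_mul,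
    integral_cos_mul_sub_one_sq_of_sin_eq_zero hmπ (sin_nat_mul_pi m)]
  rw [sqrt_eq_iff_mul_self_eq (by positivity) (by positivity)]
  field_simp
  rw [sq_sqrt (by norm_num)]

theorem sqrt_integral_fDist_sub_fEx_sq {m : ℕ} (hm : m ≠ 0) :
    √(∫ x in (0:ℝ)..1, ∫ y in (0:ℝ)..1, (fDist m x y - fEx x y) ^ 2) = m / 2 := by
  have hmπ : (m : ℝ) * π ≠ 0 := mul_ne_zero (Nat.cast_ne_zero.mpr hm) pi_ne_zero
  have hdiff : ∀ x y, fDist m x y - fEx x y = m * cos ((m : ℝ) * π * x) * cos (π * y) := by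
    intro x y; simp only [fDist]; ring
  simp_rw [hdiff, integral_integral_mul_cos_pi_sq, mul_pow, integral_const_mul,
    integral_cos_mul_sq_of_sin_eq_zero hmπ (sin_nat_mul_pi m)]
  rw [sqrt_eq_iff_mul_self_eq (by positivity) (by positivity)]
  ring

/-- The numerical ill-posedness example: for even `m ≥ 2`, the pair `(ũ_m, f̃_m)` solves the
heat-source system with data `g₀m = ũ_m(·,·,0)`, `g₁m = ũ_m(·,·,1)`; the data errors are
`√3/(2m)` and `e^{−π²}√3/(2m)` while the solution error is `m/2`. -/
theorem ill_posedness_example (m : ℕ) (hm : 2 ≤ m) (hme : Even m) :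
    -- (a) the heat equation holds everywhere
    (∀ x y t : ℝ,
      deriv (uDist m x y) t - iteratedDeriv 2 (fun s => uDist m s y t) x
        - iteratedDeriv 2 (fun s => uDist m x s t) y = phiEx t * fDist m x y)
    -- (b) boundary conditions
    ∧ (∀ y ∈ Set.Icc (0:ℝ) 1, ∀ t ∈ Set.Icc (0:ℝ) 1,
        deriv (fun s => uDist m s y t) 0 = 0 ∧ deriv (fun s => uDist m s y t) 1 = 0
          ∧ uDist m 1 y t = 0)
    ∧ (∀ x ∈ Set.Icc (0:ℝ) 1, ∀ t ∈ Set.Icc (0:ℝ) 1,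
        deriv (fun s => uDist m x s t) 0 = 0 ∧ deriv (fun s => uDist m x s t) 1 = 0)
    -- (c) data errors
    ∧ Real.sqrt (∫ x in (0:ℝ)..1, ∫ y in (0:ℝ)..1, (uDist m x y 0 - uEx x y 0)^2)
        = Real.sqrt 3 / (2 * m)
    ∧ Real.sqrt (∫ x in (0:ℝ)..1, ∫ y in (0:ℝ)..1, (uDist m x y 1 - uEx x y 1)^2)
        = Real.exp (-π^2) * Real.sqrt 3 / (2 * m)
    -- (d) solution error
    ∧ Real.sqrt (∫ x in (0:ℝ)..1, ∫ y in (0:ℝ)..1, (fDist m x y - fEx x y)^2)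
        = (m:ℝ) / 2 := by
  have hm0 : m ≠ 0 := by omega
  refine ⟨uDist_heat_equation m, fun y _ t _ => ⟨?_, ?_, uDist_one_eq_zero hme y t⟩,
    fun x _ t _ => ⟨?_, ?_⟩, ?_, ?_, sqrt_integral_fDist_sub_fEx_sq hm0⟩
  · simp [deriv_uDist_x]
  · simp [deriv_uDist_x, sin_nat_mul_pi]
  · simp [deriv_uDist_y]
  · simp [deriv_uDist_y]
  · simpa using sqrt_integral_uDist_sub_uEx_sq hm0 0
  · simpa using sqrt_integral_uDist_sub_uEx_sq hm0 1
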